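/- If the sequent Π → A is derivable in Lb*, then for all k, m ≥ 0 and any variable q the sequent (q\q)ᵏ, [Π], (q\q)ᵐ → (q\q)·⟨⟩A·(q\q) is derivable in Lb*, where (q\q)ⁿ denotes the meta-formula q\q, q\q, …, q\q (n times). -/
import Mathlib


/-! Formulas of the Lambek calculus with brackets (and the unit constant `one`,
which is used only in the calculus Lb*₁). Variables are indexed by `ℕ`. -/
inductive Fm : Type
  | var : ℕ → Fm            -- variables p₁, p₂, …
  | one : Fm                 -- the unit constant 𝟏
  | ldiv : Fm → Fm → Fm      -- `ldiv A B` is A \ B (left division)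
  | rdiv : Fm → Fm → Fm      -- `rdiv B A` is B / A (right division)
  | mul : Fm → Fm → Fm       -- `mul A B` is A · B (product)
  | dia : Fm → Fm            -- ⟨⟩A
  | box : Fm → Fm            -- []⁻¹A

/-- Meta-formulas are lists of items; an item is a formula or a bracketed
meta-formula.  The comma is list append (hence associative with unit `[]`, the
empty meta-formula Λ). -/
inductive Item : Type
  | fm : Fm → Item
  | br : List Item → Item

/-- One-hole contexts Δ(·) in meta-formulas: the hole is a designated
occurrence of a sub-meta-formula, possibly under brackets. -/
inductive Ctx : Type
  | hole : List Item → List Item → Ctx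
  | br : List Item → Ctx → List Item → Ctx

/-- Plugging a meta-formula into the hole of a context. -/
def Ctx.plug : Ctx → List Item → List Item
  | .hole l r, Γ => l ++ Γ ++ r
  | .br l c r, Γ => l ++ Item.br (c.plug Γ) :: r

/-- Derivability in the Lambek calculus with brackets Lb* (no unit rules). -/
inductive LbS : List Item → Fm → Prop
  | ax (p : ℕ) : LbS [.fm (.var p)] (.var p)
  | ldiv_l (Γ : List Item) (Δ : Ctx) (A B C : Fm) :
      LbS Γ A → LbS (Δ.plug [.fm B]) C → LbS (Δ.plug (Γ ++ [.fm (.ldiv A B)])) C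
  | ldiv_r (Γ : List Item) (A B : Fm) :
      LbS (.fm A :: Γ) B → LbS Γ (.ldiv A B)
  | rdiv_l (Γ : List Item) (Δ : Ctx) (A B C : Fm) :
      LbS Γ A → LbS (Δ.plug [.fm B]) C → LbS (Δ.plug (.fm (.rdiv B A) :: Γ)) C
  | rdiv_r (Γ : List Item) (A B : Fm) :
      LbS (Γ ++ [.fm A]) B → LbS Γ (.rdiv B A)
  | mul_l (Δ : Ctx) (A B C : Fm) :
      LbS (Δ.plug [.fm A, .fm B]) C → LbS (Δ.plug [.fm (.mul A B)]) C
  | mul_r (Γ Θ : List Item) (A B : Fm) :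
      LbS Γ A → LbS Θ B → LbS (Γ ++ Θ) (.mul A B)
  | dia_l (Δ : Ctx) (A C : Fm) :
      LbS (Δ.plug [.br [.fm A]]) C → LbS (Δ.plug [.fm (.dia A)]) C
  | dia_r (Γ : List Item) (A : Fm) :
      LbS Γ A → LbS [.br Γ] (.dia A)
  | box_l (Δ : Ctx) (A C : Fm) :
      LbS (Δ.plug [.fm A]) C → LbS (Δ.plug [.br [.fm (.box A)]]) C
  | box_r (Γ : List Item) (A : Fm) :
      LbS [.br Γ] A → LbS Γ (.box A)

/-- Derivability in the Lambek calculus with brackets and the unit, Lb*₁. -/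
inductive Lb1 : List Item → Fm → Prop
  | ax (p : ℕ) : Lb1 [.fm (.var p)] (.var p)
  | ldiv_l (Γ : List Item) (Δ : Ctx) (A B C : Fm) :
      Lb1 Γ A → Lb1 (Δ.plug [.fm B]) C → Lb1 (Δ.plug (Γ ++ [.fm (.ldiv A B)])) C
  | ldiv_r (Γ : List Item) (A B : Fm) :
      Lb1 (.fm A :: Γ) B → Lb1 Γ (.ldiv A B)
  | rdiv_l (Γ : List Item) (Δ : Ctx) (A B C : Fm) :
      Lb1 Γ A → Lb1 (Δ.plug [.fm B]) C → Lb1 (Δ.plug (.fm (.rdiv B A) :: Γ)) C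
  | rdiv_r (Γ : List Item) (A B : Fm) :
      Lb1 (Γ ++ [.fm A]) B → Lb1 Γ (.rdiv B A)
  | mul_l (Δ : Ctx) (A B C : Fm) :
      Lb1 (Δ.plug [.fm A, .fm B]) C → Lb1 (Δ.plug [.fm (.mul A B)]) C
  | mul_r (Γ Θ : List Item) (A B : Fm) :
      Lb1 Γ A → Lb1 Θ B → Lb1 (Γ ++ Θ) (.mul A B)
  | dia_l (Δ : Ctx) (A C : Fm) :
      Lb1 (Δ.plug [.br [.fm A]]) C → Lb1 (Δ.plug [.fm (.dia A)]) C
  | dia_r (Γ : List Item) (A : Fm) :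
      Lb1 Γ A → Lb1 [.br Γ] (.dia A)
  | box_l (Δ : Ctx) (A C : Fm) :
      Lb1 (Δ.plug [.fm A]) C → Lb1 (Δ.plug [.br [.fm (.box A)]]) C
  | box_r (Γ : List Item) (A : Fm) :
      Lb1 [.br Γ] A → Lb1 Γ (.box A)
  | one_l (Δ : Ctx) (C : Fm) :
      Lb1 (Δ.plug []) C → Lb1 (Δ.plug [.fm .one]) C
  | one_r : Lb1 [] .one

/-- `ones n` is the meta-formula 𝟏ⁿ = 𝟏, 𝟏, …, 𝟏 (n times). -/
def ones (n : ℕ) : List Item := List.replicate n (.fm .one)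

/-- Derivability in the modified calculus Lb*₁′: the rule (𝟏→) is removed and
the axioms (→𝟏), (ax) and the rules (→⟨⟩), ([]⁻¹→) are replaced by their
primed versions; all other rules of Lb*₁ are kept intact. -/
inductive Lb1' : List Item → Fm → Prop
  | ax' (k m p : ℕ) :
      Lb1' (ones k ++ .fm (.var p) :: ones m) (.var p)
  | one_r' (k : ℕ) : Lb1' (ones k) .one
  | ldiv_l (Γ : List Item) (Δ : Ctx) (A B C : Fm) :
      Lb1' Γ A → Lb1' (Δ.plug [.fm B]) C → Lb1' (Δ.plug (Γ ++ [.fm (.ldiv A B)])) C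
  | ldiv_r (Γ : List Item) (A B : Fm) :
      Lb1' (.fm A :: Γ) B → Lb1' Γ (.ldiv A B)
  | rdiv_l (Γ : List Item) (Δ : Ctx) (A B C : Fm) :
      Lb1' Γ A → Lb1' (Δ.plug [.fm B]) C → Lb1' (Δ.plug (.fm (.rdiv B A) :: Γ)) C
  | rdiv_r (Γ : List Item) (A B : Fm) :
      Lb1' (Γ ++ [.fm A]) B → Lb1' Γ (.rdiv B A)
  | mul_l (Δ : Ctx) (A B C : Fm) :
      Lb1' (Δ.plug [.fm A, .fm B]) C → Lb1' (Δ.plug [.fm (.mul A B)]) C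
  | mul_r (Γ Θ : List Item) (A B : Fm) :
      Lb1' Γ A → Lb1' Θ B → Lb1' (Γ ++ Θ) (.mul A B)
  | dia_l (Δ : Ctx) (A C : Fm) :
      Lb1' (Δ.plug [.br [.fm A]]) C → Lb1' (Δ.plug [.fm (.dia A)]) C
  | dia_r' (k m : ℕ) (Γ : List Item) (A : Fm) :
      Lb1' Γ (.dia A) → Lb1' (ones k ++ .br Γ :: ones m) (.dia A)
  | box_l' (k m : ℕ) (Δ : Ctx) (B C : Fm) :
      Lb1' (Δ.plug [.fm B]) C →
      Lb1' (Δ.plug [.br (ones k ++ .fm (.box B) :: ones m)]) C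
  | box_r (Γ : List Item) (A : Fm) :
      Lb1' [.br Γ] A → Lb1' Γ (.box A)

/-- The formula q \ q. -/
def qq (q : ℕ) : Fm := .ldiv (.var q) (.var q)

mutual
/-- The translation τ⁺ (for positive occurrences), with distinguished variable q. -/
def tauP (q : ℕ) : Fm → Fm
  | .one => qq q
  | .var p => .mul (.mul (qq q) (.var p)) (qq q)
  | .ldiv A B => .ldiv (tauM q A) (tauP q B)
  | .rdiv B A => .rdiv (tauP q B) (tauP q A)
  | .mul A B => .mul (tauP q A) (tauP q B)
  | .dia A => .mul (.mul (qq q) (.dia (tauP q A))) (qq q)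
  | .box A => .box (tauM q A)
/-- The translation τ⁻ (for negative occurrences), with distinguished variable q. -/
def tauM (q : ℕ) : Fm → Fm
  | .one => qq q
  | .var p => .var p
  | .ldiv A B => .ldiv (tauM q A) (tauM q B)
  | .rdiv B A => .rdiv (tauM q B) (tauP q A)
  | .mul A B => .mul (tauM q A) (tauM q B)
  | .dia A => .dia (tauM q A)
  | .box A => .ldiv (qq q) (.rdiv (.box (tauM q A)) (qq q))
end

mutual
/-- τ⁻ on items of meta-formulas. -/
def tauItem (q : ℕ) : Item → Item
  | .fm A => .fm (tauM q A)
  | .br Γ => .br (tauMeta q Γ)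
/-- τ⁻ on meta-formulas. -/
def tauMeta (q : ℕ) : List Item → List Item
  | [] => []
  | i :: Γ => tauItem q i :: tauMeta q Γ
end

/-- The variable q does not occur in a formula. -/
def Fm.qFree (q : ℕ) : Fm → Prop
  | .var p => p ≠ q
  | .one => True
  | .ldiv A B => A.qFree q ∧ B.qFree q
  | .rdiv B A => B.qFree q ∧ A.qFree q
  | .mul A B => A.qFree q ∧ B.qFree q
  | .dia A => A.qFree q
  | .box A => A.qFree q

mutual
/-- The variable q does not occur in an item. -/
def Item.qFree (q : ℕ) : Item → Prop
  | .fm A => A.qFree q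
  | .br Γ => MetaQFree q Γ
/-- The variable q does not occur in a meta-formula. -/
def MetaQFree (q : ℕ) : List Item → Prop
  | [] => True
  | i :: Γ => i.qFree q ∧ MetaQFree q Γ
end

/-- Substitution of the formula E for the variable q in a formula (the unit
constant is not affected). -/
def Fm.subst (q : ℕ) (E : Fm) : Fm → Fm
  | .var p => if p = q then E else .var p
  | .one => .one
  | .ldiv A B => .ldiv (Fm.subst q E A) (Fm.subst q E B)
  | .rdiv B A => .rdiv (Fm.subst q E B) (Fm.subst q E A)
  | .mul A B => .mul (Fm.subst q E A) (Fm.subst q E B)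
  | .dia A => .dia (Fm.subst q E A)
  | .box A => .box (Fm.subst q E A)

mutual
/-- Substitution of E for the variable q in an item. -/
def Item.subst (q : ℕ) (E : Fm) : Item → Item
  | .fm A => .fm (Fm.subst q E A)
  | .br Γ => .br (Meta.subst q E Γ)
/-- Substitution of E for the variable q in a meta-formula. -/
def Meta.subst (q : ℕ) (E : Fm) : List Item → List Item
  | [] => []
  | i :: Γ => Item.subst q E i :: Meta.subst q E Γ
end

/-- A formula contains no occurrence of the unit constant (i.e. it is an
Lb*-formula). -/
def Fm.unitFree : Fm → Prop
  | .var _ => True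
  | .one => False
  | .ldiv A B => A.unitFree ∧ B.unitFree
  | .rdiv B A => B.unitFree ∧ A.unitFree
  | .mul A B => A.unitFree ∧ B.unitFree
  | .dia A => A.unitFree
  | .box A => A.unitFree

mutual
/-- The yield of an item: erase all brackets. -/
def Item.yield : Item → List Fm
  | .fm A => [A]
  | .br Γ => yieldMeta Γ
/-- The yield of a meta-formula: the list of its formulas, with all brackets erased. -/
def yieldMeta : List Item → List Fm
  | [] => []
  | i :: Γ => i.yield ++ yieldMeta Γ
end

/-- A categorial grammar over the alphabet α: a lexical relation ▷ between
letters and formulas, and a target formula H. -/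
structure Grammar (α : Type) where
  rel : α → Fm → Prop
  target : Fm

/-- The lexical relation of the grammar is finite. -/
def Grammar.Finite {α : Type} (G : Grammar α) : Prop :=
  {p : α × Fm | G.rel p.1 p.2}.Finite

/-- The grammar is an Lb*-grammar: no occurrence of the unit constant. -/
def Grammar.UnitFree {α : Type} (G : Grammar α) : Prop :=
  G.target.unitFree ∧ ∀ a A, G.rel a A → A.unitFree

/-- The variable q does not occur in the grammar. -/
def Grammar.AvoidsVar {α : Type} (q : ℕ) (G : Grammar α) : Prop :=
  G.target.qFree q ∧ ∀ a A, G.rel a A → A.qFree q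

/-- The translated grammar: τ⁻ applied to all formulas in the lexical
relation and τ⁺ to the target formula. -/
def Grammar.translate {α : Type} (q : ℕ) (G : Grammar α) : Grammar α :=
  ⟨fun a A => ∃ B, G.rel a B ∧ A = tauM q B, tauP q G.target⟩

/-- The language t-generated by a grammar, relative to a derivability
relation D: a word a₁…aₙ is t-accepted if aᵢ ▷ Aᵢ for some formulas Aᵢ and
some meta-formula Γ with yield A₁,…,Aₙ is derivably mapped to the target. -/
def tLang {α : Type} (D : List Item → Fm → Prop) (G : Grammar α) : Set (List α) :=
  {w | ∃ As : List Fm, List.Forall₂ G.rel w As ∧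
        ∃ Γ : List Item, D Γ G.target ∧ yieldMeta Γ = As}

/-- The language s-generated by a grammar, relative to a derivability
relation D: a word a₁…aₙ is s-accepted if aᵢ ▷ Aᵢ for some formulas Aᵢ such
that the bracket-free sequent A₁,…,Aₙ → H is derivable. -/
def sLang {α : Type} (D : List Item → Fm → Prop) (G : Grammar α) : Set (List α) :=
  {w | ∃ As : List Fm, List.Forall₂ G.rel w As ∧ D (As.map Item.fm) G.target}

/-- If Γ → A is derivable in Lb*, then for all k, m ≥ 0 and
any variable q, the sequent (q\q)ᵏ, [Γ], (q\q)ᵐ → (q\q)·⟨⟩A·(q\q) is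
derivable in Lb*. -/
theorem qq_bracket_qq (Γ : List Item) (A : Fm) (h : LbS Γ A) (k m q : ℕ) :
    LbS (List.replicate k (.fm (qq q)) ++ .br Γ :: List.replicate m (.fm (qq q)))
      (.mul (.mul (qq q) (.dia A)) (qq q)) := by
  have lem1 : ∀ n, LbS (.fm (.var q) :: List.replicate n (.fm (qq q))) (.var q) := by
    intro n
    induction n with
    | zero => exact LbS.ax q
    | succ n ih =>
      have := LbS.ldiv_l [.fm (.var q)] (Ctx.hole [] (List.replicate n (.fm (qq q))))
        (.var q) (.var q) (.var q) (LbS.ax q) (by simpa [Ctx.plug] using ih)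
      simpa [Ctx.plug, List.replicate_succ, qq] using this
  have lem2 : ∀ n, LbS (List.replicate n (.fm (qq q))) (qq q) := fun n =>
    LbS.ldiv_r _ _ _ (lem1 n)
  have hbr : LbS [.br Γ] (.dia A) := LbS.dia_r Γ A h
  have h1 : LbS (List.replicate k (.fm (qq q)) ++ [.br Γ]) (.mul (qq q) (.dia A)) :=
    LbS.mul_r _ _ _ _ (lem2 k) hbr
  have h2 := LbS.mul_r _ _ _ _ h1 (lem2 m)
  simpa using h2
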